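/- The node-centered cosine and sine matrices satisfy: Ȟ_c² + Ȟ_s² = I_n; Ȟ_c·Ȟ_s = Ȟ_s·Ȟ_c = 0; Ȟ_c·1_n = √n·e_1; and Ȟ_s·1_n = 0_n, where 1_n is the all-ones vector, 0_n the zero vector, and e_1 the first column of the identity matrix. -/

import Mathlib

/-!
For `m : ℤ`, the sum `∑ₖ e^{2πimk/n}` over `k < n` is a geometric sum of the `m`-th power of a
primitive `n`-th root of unity, hence equals `n` if `n ∣ m` and `0` otherwise; its real and imaginary
parts give the cosine and sine sums. The product-to-sum formulas turn every entry of
`Ȟ_c² + Ȟ_s²`, `Ȟ_c Ȟ_s`, `Ȟ_c 1` and `Ȟ_s 1` into such sums, and `Ȟ_s Ȟ_c = (Ȟ_c Ȟ_s)ᵀ` because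
both matrices are symmetric.
-/

open Matrix Real

/-- The node-centered cosine matrix `(Ȟ_c)_{j,k} = n^{−1/2}·cos(2jkπ/n)`. -/
noncomputable def Hc (n : ℕ) : Matrix (Fin n) (Fin n) ℝ :=
  fun j k => Real.cos (2 * (j.val : ℝ) * (k.val : ℝ) * Real.pi / n) / Real.sqrt n

/-- The node-centered sine matrix `(Ȟ_s)_{j,k} = n^{−1/2}·sin(2jkπ/n)`. -/
noncomputable def Hs (n : ℕ) : Matrix (Fin n) (Fin n) ℝ :=
  fun j k => Real.sin (2 * (j.val : ℝ) * (k.val : ℝ) * Real.pi / n) / Real.sqrt n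

open Finset

theorem sum_cexp_two_mul_mul_pi_div (n : ℕ) (m : ℤ) :
    ∑ k : Fin n, Complex.exp (↑(2 * m * k * π / n) * Complex.I) =
      if (n : ℤ) ∣ m then (n : ℂ) else 0 := by
  obtain rfl | hn := eq_or_ne n 0
  · simp
  have hprim := Complex.isPrimitiveRoot_exp n hn
  set ζ := Complex.exp (2 * π * Complex.I / n) ^ m
  have hpow : ∀ k : ℕ, Complex.exp (↑(2 * m * k * π / n) * Complex.I) = ζ ^ k := by
    intro k
    rw [← zpow_natCast, ← _root_.zpow_mul, ← Complex.exp_int_mul]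
    congr 1
    push_cast
    ring
  rw [Fin.sum_univ_eq_sum_range (fun k : ℕ => Complex.exp (↑(2 * m * k * π / n) * Complex.I)),
    sum_congr rfl fun k _ => hpow k]
  split_ifs with hdvd
  · have hζ : ζ = 1 := (hprim.zpow_eq_one_iff_dvd m).mpr hdvd
    simp [hζ]
  · have hζ : ζ ≠ 1 := by rwa [ne_eq, hprim.zpow_eq_one_iff_dvd]
    have hζn : ζ ^ n = 1 := by
      rw [← zpow_natCast, ← _root_.zpow_mul, hprim.zpow_eq_one_iff_dvd]
      exact dvd_mul_left _ _
    rw [geom_sum_eq hζ, hζn, sub_self, zero_div]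

theorem sum_cos_two_mul_mul_pi_div (n : ℕ) (m : ℤ) :
    ∑ k : Fin n, cos (2 * m * k * π / n) = if (n : ℤ) ∣ m then (n : ℝ) else 0 := by
  have h := congrArg Complex.re (sum_cexp_two_mul_mul_pi_div n m)
  simp only [Complex.re_sum, Complex.exp_ofReal_mul_I_re] at h
  rw [h]
  split_ifs <;> simp

theorem sum_sin_two_mul_mul_pi_div (n : ℕ) (m : ℤ) :
    ∑ k : Fin n, sin (2 * m * k * π / n) = 0 := by
  have h := congrArg Complex.im (sum_cexp_two_mul_mul_pi_div n m)
  simp only [Complex.im_sum, Complex.exp_ofReal_mul_I_im] at h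
  rw [h]
  split_ifs <;> simp

theorem Fin.natCast_dvd_sub_iff {n : ℕ} (j l : Fin n) : (n : ℤ) ∣ (j : ℤ) - l ↔ j = l := by
  rw [← Nat.modEq_iff_dvd]
  exact ⟨fun h => Fin.ext (h.eq_of_lt_of_lt l.isLt j.isLt).symm, fun h => h ▸ rfl⟩

theorem Fin.natCast_dvd_val_iff {n : ℕ} (j : Fin n) : (n : ℤ) ∣ (j : ℤ) ↔ (j : ℕ) = 0 := by
  rw [Int.natCast_dvd_natCast]
  exact ⟨fun h => Nat.eq_zero_of_dvd_of_lt h j.isLt, fun h => h ▸ dvd_zero n⟩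

theorem sum_cos_mul_cos_add_sin_mul_sin (n j l : ℕ) :
    ∑ k : Fin n, (cos (2 * j * k * π / n) * cos (2 * k * l * π / n) +
      sin (2 * j * k * π / n) * sin (2 * k * l * π / n)) =
      if (n : ℤ) ∣ (j - l : ℤ) then (n : ℝ) else 0 := by
  rw [← sum_cos_two_mul_mul_pi_div]
  refine sum_congr rfl fun k _ => ?_
  rw [← cos_sub]
  congr 1
  push_cast
  ring

theorem sum_cos_mul_sin (n j l : ℕ) :
    ∑ k : Fin n, cos (2 * j * k * π / n) * sin (2 * k * l * π / n) = 0 := by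
  have hterm : ∀ k : Fin n, cos (2 * j * k * π / n) * sin (2 * k * l * π / n) =
      (sin (2 * (l - j : ℤ) * k * π / n) + sin (2 * (l + j : ℤ) * k * π / n)) / 2 := by
    intro k
    have h := two_mul_sin_mul_cos (2 * k * l * π / n) (2 * j * k * π / n)
    rw [show (2 * ((l - j : ℤ) : ℝ) * k * π / n) = 2 * k * l * π / n - 2 * j * k * π / n by
        push_cast; ring,
      show (2 * ((l + j : ℤ) : ℝ) * k * π / n) = 2 * k * l * π / n + 2 * j * k * π / n by
        push_cast; ring, ← h]
    ring
  simp only [hterm, ← sum_div, sum_add_distrib, sum_sin_two_mul_mul_pi_div,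
    add_zero, zero_div]

theorem sum_div_sqrt_mul_div_sqrt {n : ℕ} (f g : Fin n → ℝ) :
    ∑ k, f k / √n * (g k / √n) = (∑ k, f k * g k) / n := by
  simp only [div_mul_div_comm, mul_self_sqrt n.cast_nonneg, sum_div]

theorem Hc_transpose (n : ℕ) : (Hc n)ᵀ = Hc n := by
  ext j k
  simp only [transpose_apply, Hc]
  ring_nf

theorem Hs_transpose (n : ℕ) : (Hs n)ᵀ = Hs n := by
  ext j k
  simp only [transpose_apply, Hs]
  ring_nf

theorem Hc_mul_Hc_add_Hs_mul_Hs (n : ℕ) : Hc n * Hc n + Hs n * Hs n = 1 := by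
  ext j l
  have hn : (n : ℝ) ≠ 0 := Nat.cast_ne_zero.mpr (Fin.pos j).ne'
  simp only [Matrix.add_apply, mul_apply, Hc, Hs, sum_div_sqrt_mul_div_sqrt, ← add_div,
    ← sum_add_distrib, sum_cos_mul_cos_add_sin_mul_sin, Fin.natCast_dvd_sub_iff, one_apply]
  split_ifs <;> simp [hn]

theorem Hc_mul_Hs (n : ℕ) : Hc n * Hs n = 0 := by
  ext j l
  simp only [mul_apply, Hc, Hs, sum_div_sqrt_mul_div_sqrt, sum_cos_mul_sin, zero_div,
    Matrix.zero_apply]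

theorem Hs_mul_Hc (n : ℕ) : Hs n * Hc n = 0 := by
  rw [← Hc_transpose, ← Hs_transpose, ← transpose_mul, Hc_mul_Hs, transpose_zero]

theorem Hc_mulVec_one (n : ℕ) :
    Hc n *ᵥ (fun _ => 1) = √n • fun i : Fin n => if (i : ℕ) = 0 then (1 : ℝ) else 0 := by
  ext j
  have h := sum_cos_two_mul_mul_pi_div n j
  simp only [Int.cast_natCast, Fin.natCast_dvd_val_iff] at h
  simp only [mulVec, dotProduct, Hc, mul_one, ← sum_div, h, Pi.smul_apply, smul_eq_mul]
  split_ifs <;> simp [div_sqrt]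

theorem Hs_mulVec_one (n : ℕ) : Hs n *ᵥ (fun _ => 1) = 0 := by
  ext j
  have h := sum_sin_two_mul_mul_pi_div n j
  simp only [Int.cast_natCast] at h
  simp only [mulVec, dotProduct, Hs, mul_one, ← sum_div, h, zero_div, Pi.zero_apply]

theorem node_hartley_cos_sin_props_general (n : ℕ) :
    Hc n * Hc n + Hs n * Hs n = (1 : Matrix (Fin n) (Fin n) ℝ) ∧
    Hc n * Hs n = 0 ∧ Hs n * Hc n = 0 ∧
    (Hc n).mulVec (fun _ => 1) =
      Real.sqrt n • (fun i : Fin n => if i.val = 0 then (1 : ℝ) else 0) ∧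
    (Hs n).mulVec (fun _ => 1) = 0 :=
  ⟨Hc_mul_Hc_add_Hs_mul_Hs n, Hc_mul_Hs n, Hs_mul_Hc n, Hc_mulVec_one n, Hs_mulVec_one n⟩

/-- `Ȟ_c² + Ȟ_s² = I_n`; `Ȟ_c·Ȟ_s = Ȟ_s·Ȟ_c = 0`; `Ȟ_c·1_n = √n·e₁`; `Ȟ_s·1_n = 0_n`. -/
theorem node_hartley_cos_sin_props (n : ℕ) (hn : 1 ≤ n) :
    Hc n * Hc n + Hs n * Hs n = (1 : Matrix (Fin n) (Fin n) ℝ) ∧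
    Hc n * Hs n = 0 ∧ Hs n * Hc n = 0 ∧
    (Hc n).mulVec (fun _ => 1) =
      Real.sqrt n • (fun i : Fin n => if i.val = 0 then (1 : ℝ) else 0) ∧
    (Hs n).mulVec (fun _ => 1) = 0 :=
  node_hartley_cos_sin_props_general n
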